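/- arXiv:2001.06460 — 3 statements merged into one kernel-verified Lean document; each statement's English description precedes it below -/
import Mathlib

section
/- For every integer n ≥ 2, the determinant of the leftover matrix L^n satisfies det(L^n) = (1 − x_1²)(1 − x_2²)⋯(1 − x_n²) · (1 − x_1²x_2²⋯x_n²)^{n−2} in ℤ[x_1,…,x_n]. -/
open MvPolynomial

/-- The leftover matrix `L^n`: the symmetric `(n-1) × (n-1)` matrix over
`ℤ[x_1, …, x_n]` whose `(i, j)` entry (in 1-based terms, for `i ≤ j`) is
`(∏_{a=i+1}^{j} x_a) · (1 − ∏_{a=1}^{i} x_a²) · (1 − ∏_{a=j+1}^{n} x_a²)`.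
Here the indices of `Fin (n-1)` and `Fin n` are 0-based. -/
noncomputable def leftover (n : ℕ) :
    Matrix (Fin (n - 1)) (Fin (n - 1)) (MvPolynomial (Fin n) ℤ) :=
  Matrix.of fun i j =>
    (∏ a : Fin n, if min i.val j.val < a.val ∧ a.val ≤ max i.val j.val then X a else 1) *
      (1 - ∏ a : Fin n, if a.val ≤ min i.val j.val then X a ^ 2 else 1) *
      (1 - ∏ a : Fin n, if max i.val j.val < a.val then X a ^ 2 else 1)

/-!
For `i ≤ j` the `(i, j)` entry of `L^n` is `w(i, j) a_i b_j` with `a_i = 1 − x_1² ⋯ x_i²`,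
`b_j = 1 − x_{j+1}² ⋯ x_n²` and `w(i, j) = x_{i+1} ⋯ x_j`, which is multiplicative along
`i ≤ j ≤ k`: `L^n` is a weighted Green (single-pair) matrix. In such a matrix of size `m`, replacing
row `m` by `b_{m-1}·(row m) − w(m-1, m) b_m·(row m-1)` leaves only the diagonal entry
`b_m (a_m b_{m-1} − w(m-1, m)² a_{m-1} b_m)`; cancelling the nonzero `b_{m-1}` and inducting gives
`det = a_1 b_m ∏_{1 ≤ k < m} (a_{k+1} b_k − w(k, k+1)² a_k b_{k+1})`.
As `x_1² ⋯ x_k² · x_{k+1}² ⋯ x_n² = x_1² ⋯ x_n²`, each factor collapses to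
`(1 − x_{k+1}²)(1 − x_1² ⋯ x_n²)`.
-/

open Finset

section Green

variable {R : Type*} [CommRing R]

theorem Matrix.det_updateRow_last_single {m : ℕ} (A : Matrix (Fin (m + 1)) (Fin (m + 1)) R)
    (c : R) :
    (A.updateRow (Fin.last m) (Pi.single (Fin.last m) c)).det =
      c * (A.submatrix Fin.castSucc Fin.castSucc).det := by
  rw [Matrix.det_succ_row _ (Fin.last m), Fintype.sum_eq_single (Fin.last m)]
  · rw [Matrix.submatrix_updateRow_succAbove, Fin.succAbove_last]
    simp
  · intro j hj
    simp [hj]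

def greenMatrix (a b : ℕ → R) (w : ℕ → ℕ → R) (m : ℕ) : Matrix (Fin m) (Fin m) R :=
  Matrix.of fun i j =>
    w (min i.val j.val) (max i.val j.val) * a (min i.val j.val) * b (max i.val j.val)

variable (a b : ℕ → R) (w : ℕ → ℕ → R)

theorem greenMatrix_submatrix_castSucc (m : ℕ) :
    (greenMatrix a b w (m + 1)).submatrix Fin.castSucc Fin.castSucc = greenMatrix a b w m := by
  ext i j
  simp [greenMatrix]

variable {w} (hw_self : ∀ i, w i i = 1) (hw_trans : ∀ i j k, i ≤ j → j ≤ k → w i k = w i j * w j k)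
include hw_self hw_trans

theorem mul_det_greenMatrix_succ (m : ℕ) :
    b m * (greenMatrix a b w (m + 2)).det =
      b (m + 1) * (a (m + 1) * b m - w m (m + 1) ^ 2 * a m * b (m + 1)) *
        (greenMatrix a b w (m + 1)).det := by
  set M := greenMatrix a b w (m + 2)
  have hrow : b m • M (Fin.last _) + (-(w m (m + 1) * b (m + 1))) • M (Fin.last m).castSucc =
      Pi.single (Fin.last _)
        (b (m + 1) * (a (m + 1) * b m - w m (m + 1) ^ 2 * a m * b (m + 1))) := by
    ext j
    rcases Fin.eq_castSucc_or_eq_last j with ⟨j, rfl⟩ | rfl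
    · have hj : j.val ≤ m := Nat.lt_succ_iff.mp j.isLt
      simp [M, greenMatrix, hj, Nat.le_succ_of_le hj, hw_trans j m (m + 1) hj m.le_succ,
        (Fin.castSucc_lt_last j).ne]
      ring
    · simp [M, greenMatrix, hw_self]
      ring
  calc b m * M.det
      = (M.updateRow (Fin.last _) (b m • M (Fin.last _) +
          (-(w m (m + 1) * b (m + 1))) • M (Fin.last m).castSucc)).det := by
        rw [Matrix.det_updateRow_add, Matrix.det_updateRow_smul, Matrix.det_updateRow_smul,
          Matrix.updateRow_eq_self, Matrix.det_updateRow_eq_zero (Fin.castSucc_lt_last _).ne,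
          mul_zero, add_zero]
    _ = _ := by
        rw [hrow, Matrix.det_updateRow_last_single, greenMatrix_submatrix_castSucc]

theorem det_greenMatrix (m : ℕ) (hb : ∀ k < m, IsLeftRegular (b k)) :
    (greenMatrix a b w (m + 1)).det =
      a 0 * b m * ∏ k ∈ range m, (a (k + 1) * b k - w k (k + 1) ^ 2 * a k * b (k + 1)) := by
  induction m with
  | zero => simp [greenMatrix, hw_self]
  | succ m ih =>
    refine (hb m m.lt_succ_self).eq_iff.mp ?_
    rw [mul_det_greenMatrix_succ a b hw_self hw_trans, ih fun k hk => hb k (by omega),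
      prod_range_succ]
    ring

end Green

theorem Fintype.prod_ite_mul_prod_ite_of_iff {ι M : Type*} [Fintype ι] [CommMonoid M]
    {p q r : ι → Prop} [DecidablePred p] [DecidablePred q] [DecidablePred r] (f : ι → M)
    (hpq : ∀ i, p i → ¬ q i) (hr : ∀ i, r i ↔ p i ∨ q i) :
    (∏ i, if p i then f i else 1) * (∏ i, if q i then f i else 1) =
      ∏ i, if r i then f i else 1 := by
  rw [← prod_mul_distrib]
  refine Finset.prod_congr rfl fun i _ => ?_
  by_cases hp : p i <;> by_cases hq : q i <;> simp_all

theorem Fintype.prod_ite_of_iff_eq {ι M : Type*} [Fintype ι] [DecidableEq ι] [CommMonoid M]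
    {p : ι → Prop} [DecidablePred p] (f : ι → M) (i₀ : ι) (hp : ∀ i, p i ↔ i = i₀) :
    (∏ i, if p i then f i else 1) = f i₀ := by
  simp_rw [hp, Fintype.prod_ite_eq']

section SquareProducts

variable {R : Type*} [CommRing R] {n : ℕ} (x : Fin n → R)

def segmentProd (i j : ℕ) : R :=
  ∏ a : Fin n, if i < a.val ∧ a.val ≤ j then x a else 1

def prefixSqProd (k : ℕ) : R :=
  ∏ a : Fin n, if a.val ≤ k then x a ^ 2 else 1

def suffixSqProd (k : ℕ) : R :=
  ∏ a : Fin n, if k < a.val then x a ^ 2 else 1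

theorem segmentProd_self (i : ℕ) : segmentProd x i i = 1 :=
  prod_eq_one fun a _ => if_neg (by omega)

theorem segmentProd_trans (i j k : ℕ) (hij : i ≤ j) (hjk : j ≤ k) :
    segmentProd x i k = segmentProd x i j * segmentProd x j k :=
  (Fintype.prod_ite_mul_prod_ite_of_iff x (by omega) (by omega)).symm

theorem segmentProd_succ (k : ℕ) (hk : k + 1 < n) : segmentProd x k (k + 1) = x ⟨k + 1, hk⟩ :=
  Fintype.prod_ite_of_iff_eq x _ fun a => by simp [Fin.ext_iff]; omega

theorem segmentProd_sq (i j : ℕ) :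
    segmentProd x i j ^ 2 = ∏ a : Fin n, if i < a.val ∧ a.val ≤ j then x a ^ 2 else 1 := by
  rw [segmentProd, ← prod_pow]
  exact prod_congr rfl fun a _ => by split_ifs <;> simp

theorem prefixSqProd_succ (k : ℕ) :
    prefixSqProd x (k + 1) = prefixSqProd x k * segmentProd x k (k + 1) ^ 2 := by
  rw [segmentProd_sq]
  exact (Fintype.prod_ite_mul_prod_ite_of_iff _ (by omega) (by omega)).symm

theorem suffixSqProd_eq (k : ℕ) :
    suffixSqProd x k = segmentProd x k (k + 1) ^ 2 * suffixSqProd x (k + 1) := by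
  rw [segmentProd_sq]
  exact (Fintype.prod_ite_mul_prod_ite_of_iff _ (by omega) (by omega)).symm

theorem prefixSqProd_mul_suffixSqProd (k : ℕ) :
    prefixSqProd x k * suffixSqProd x k = ∏ a, x a ^ 2 := by
  rw [prefixSqProd, suffixSqProd,
    Fintype.prod_ite_mul_prod_ite_of_iff _ (by omega) (r := fun _ => True)
      fun a => iff_of_true trivial (le_or_gt _ _)]
  simp

theorem prefixSqProd_zero (x : Fin (n + 1) → R) : prefixSqProd x 0 = x 0 ^ 2 :=
  Fintype.prod_ite_of_iff_eq _ _ fun a => by rw [Nat.le_zero, Fin.val_eq_zero_iff]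

theorem suffixSqProd_last (x : Fin (n + 2) → R) : suffixSqProd x n = x (Fin.last (n + 1)) ^ 2 :=
  Fintype.prod_ite_of_iff_eq _ _ fun a => by simp [Fin.ext_iff]; omega

theorem greenFactor_prefixSqProd_suffixSqProd (k : ℕ) :
    (1 - prefixSqProd x (k + 1)) * (1 - suffixSqProd x k) -
        segmentProd x k (k + 1) ^ 2 * (1 - prefixSqProd x k) * (1 - suffixSqProd x (k + 1)) =
      (1 - segmentProd x k (k + 1) ^ 2) * (1 - ∏ a, x a ^ 2) := by
  rw [← prefixSqProd_mul_suffixSqProd x k, prefixSqProd_succ, suffixSqProd_eq]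
  ring

end SquareProducts

theorem MvPolynomial.one_sub_suffixSqProd_X_ne_zero {R : Type*} [CommRing R] [Nontrivial R]
    {n k : ℕ} (hk : k + 1 < n) : 1 - suffixSqProd (X : Fin n → MvPolynomial (Fin n) R) k ≠ 0 := by
  intro h
  have hcoeff : constantCoeff (suffixSqProd (X : Fin n → MvPolynomial (Fin n) R) k) = 0 := by
    rw [suffixSqProd, map_prod]
    refine prod_eq_zero (mem_univ ⟨n - 1, by omega⟩) ?_
    rw [if_pos (by dsimp only; omega)]
    simp
  simpa [hcoeff] using congrArg constantCoeff h

/-- For every `n ≥ 2`,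
`det (L^n) = (1 − x_1²) ⋯ (1 − x_n²) · (1 − x_1² x_2² ⋯ x_n²)^(n-2)`. -/
theorem leftover_det (n : ℕ) (hn : 2 ≤ n) :
    (leftover n).det =
      (∏ a : Fin n, (1 - X a ^ 2)) * (1 - ∏ a : Fin n, X a ^ 2) ^ (n - 2) := by
  obtain ⟨m, rfl⟩ := Nat.exists_eq_add_of_le' hn
  have hinner : ∏ k ∈ range m, (1 - segmentProd X k (k + 1) ^ 2) =
      ∏ k : Fin m, (1 - (X k.castSucc.succ : MvPolynomial (Fin (m + 2)) ℤ) ^ 2) := by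
    rw [prod_range fun k => 1 - segmentProd X k (k + 1) ^ 2]
    exact prod_congr rfl fun k _ => by rw [segmentProd_succ X k (by omega)]; rfl
  have houter : ∏ a : Fin (m + 2), (1 - (X a : MvPolynomial (Fin (m + 2)) ℤ) ^ 2) =
      (1 - X 0 ^ 2) * (∏ k : Fin m, (1 - X k.castSucc.succ ^ 2)) *
        (1 - X (Fin.last (m + 1)) ^ 2) := by
    rw [Fin.prod_univ_succ, Fin.prod_univ_castSucc, Fin.succ_last, mul_assoc]
  calc (leftover (m + 2)).det
      = (greenMatrix (fun k => 1 - prefixSqProd X k) (fun k => 1 - suffixSqProd X k)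
          (segmentProd X) (m + 1)).det := rfl
    _ = (1 - X 0 ^ 2) * (1 - X (Fin.last (m + 1)) ^ 2) *
          ∏ k ∈ range m, (1 - segmentProd X k (k + 1) ^ 2) * (1 - ∏ a, X a ^ 2) := by
        rw [det_greenMatrix _ _ (segmentProd_self X) (segmentProd_trans X) m
          fun k hk => (IsRegular.of_ne_zero (one_sub_suffixSqProd_X_ne_zero (by omega))).left,
          prefixSqProd_zero, suffixSqProd_last]
        simp_rw [greenFactor_prefixSqProd_suffixSqProd]
    _ = _ := by
        rw [prod_mul_distrib, prod_const, card_range, hinner, houter, Nat.add_sub_cancel]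
        ring
end

section
/- For every integer n ≥ 3 and all indices 1 ≤ i, j ≤ n−2, the matrix obtained from the leftover matrix L^n by deleting its first row and first column equals the leftover matrix L^{n−1} with the variable substitution (x_1, x_2, …, x_{n−1}) ↦ (x_1x_2, x_3, …, x_n); that is, L^n_{i+1, j+1} = L^{n−1}_{i,j} evaluated at the variables (x_1x_2, x_3, x_4, …, x_n). -/
/-!
Deleting the first row and column of `L^n` shifts both indices by one, so in every product
defining an entry the variables `x_1` and `x_2` always occur together (both or neither), while
`x_{a+1}` occurs exactly when `x_a` occurs in the corresponding product for `L^{n-1}`. Merging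
`x_1 x_2` into a single variable therefore turns each of the three products of `L^n_{i+1,j+1}`
into the corresponding product of `L^{n-1}_{i,j}`.
-/

open MvPolynomial

theorem Fin.prod_univ_merge_first_two {M : Type*} [CommMonoid M] {m : ℕ}
    {x : Fin (m + 2) → M} {y : Fin (m + 1) → M} (h0 : y 0 = x 0 * x 1)
    (hsucc : ∀ k : Fin m, y k.succ = x k.succ.succ) :
    ∏ a, x a = ∏ k, y k := by
  rw [Fin.prod_univ_succ x, Fin.prod_univ_succ (fun a : Fin (m + 1) => x a.succ),
    Fin.prod_univ_succ y, h0, mul_assoc, Fin.succ_zero_eq_one]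
  simp only [hsucc]

theorem Fin.prod_ite_merge_first_two {M : Type*} [CommMonoid M] {m : ℕ}
    {P : Fin (m + 2) → Prop} {Q : Fin (m + 1) → Prop} [DecidablePred P] [DecidablePred Q]
    (hP0 : P 0 ↔ Q 0) (hP1 : P 1 ↔ Q 0) (hPQ : ∀ k : Fin m, P k.succ.succ ↔ Q k.succ)
    {x : Fin (m + 2) → M} {y : Fin (m + 1) → M} (h0 : y 0 = x 0 * x 1)
    (hsucc : ∀ k : Fin m, y k.succ = x k.succ.succ) :
    ∏ a, (if P a then x a else 1) = ∏ k, if Q k then y k else 1 := by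
  refine Fin.prod_univ_merge_first_two ?_ fun k => ?_
  · simp only [hP0, hP1, h0]
    split_ifs <;> simp
  · simp only [hPQ, hsucc]

/-- For `n ≥ 3`, the matrix obtained from `L^n` by deleting its first row and first
column is `L^{n-1}` with the variable substitution
`(x_1, x_2, …, x_{n-1}) ↦ (x_1 x_2, x_3, …, x_n)`; entrywise (0-based indices):
`L^n_{i+1, j+1}` equals the substitution applied to `L^{n-1}_{i, j}`. -/
theorem leftover_delete_first_row_col (n : ℕ) (hn : 3 ≤ n) (i j : Fin (n - 1 - 1)) :
    leftover n ⟨i.val + 1, by have := i.isLt; omega⟩ ⟨j.val + 1, by have := j.isLt; omega⟩ =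
      MvPolynomial.aeval
        (fun k : Fin (n - 1) =>
          if k.val = 0 then
            X (⟨0, by omega⟩ : Fin n) * X (⟨1, by omega⟩ : Fin n)
          else
            X (⟨k.val + 1, by have := k.isLt; omega⟩ : Fin n))
        (leftover (n - 1) i j) := by
  obtain ⟨m, rfl⟩ : ∃ m, n = m + 2 := ⟨n - 2, by omega⟩
  simp only [leftover, Matrix.of_apply, map_mul, map_sub, map_one, map_prod,
    apply_ite (MvPolynomial.aeval _), map_pow, aeval_X]
  refine congrArg₂ (· * ·) (congrArg₂ (· * ·) ?_ (congrArg (1 - ·) ?_)) (congrArg (1 - ·) ?_) <;>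
    refine Fin.prod_ite_merge_first_two ?_ ?_ (fun k => ?_) ?_ (fun k => ?_)
  -- left: the index conditions, shifted by one, and the substitution at `0` and at `k.succ`
  all_goals
    first
      | simp only [Fin.val_succ, Fin.coe_ofNat_eq_mod, Nat.zero_mod, Nat.one_mod]; omega
      | simp only [Fin.val_succ, Nat.add_one_ne_zero, if_false]; rfl
      | simp only [Fin.coe_ofNat_eq_mod, Nat.zero_mod, if_true, Fin.zero_eta, Fin.mk_one, mul_pow]
end

section
/- Let Y ∈ ℤ[x_1,…,x_N] be a monomial that is a product of distinct indeterminates (a squarefree monomial with coefficient 1), and let P ∈ ℤ[x_1,…,x_N] be a polynomial none of whose monomials shares an indeterminate with Y. Then φ(1 + Y²P) − Y² · φ(1 + P) = 1 − Y². -/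
/-! `φ` is additive and acts monomial by monomial. Writing `Y² = x^e` with `e` the
exponent vector taking the value `2` on the variables of `Y` and `0` elsewhere, a monomial `x^d`
of `P` lives on the other variables, so truncating the exponents of `x^(e + d)` at `2` leaves `e`
alone; hence `φ(Y² P) = Y² φ(P)`, and the identity follows from `φ(1) = 1`. -/

open MvPolynomial

/-- The ℤ-linear map `φ` on `ℤ[x_1, …, x_N]` that sends each monomial
`∏ x_i^{e_i}` to `∏ x_i^{min(e_i, 2)}`, i.e. replaces every exponent `≥ 3`
occurring in a monomial by `2`, extended linearly. -/
noncomputable def phi {N : ℕ} (p : MvPolynomial (Fin N) ℤ) : MvPolynomial (Fin N) ℤ :=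
  ∑ d ∈ p.support,
    MvPolynomial.monomial (Finsupp.mapRange (fun e => min e 2) (by simp) d) (p.coeff d)

theorem Finsupp.mapRange_min_add_of_disjoint {σ : Type*} {k : ℕ} {e d : σ →₀ ℕ}
    (he : ∀ i, e i ≤ k) (hed : ∀ i, e i = 0 ∨ d i = 0) :
    Finsupp.mapRange (fun n => min n k) (Nat.zero_min k) (e + d) =
      e + Finsupp.mapRange (fun n => min n k) (Nat.zero_min k) d := by
  ext i
  rcases hed i with h | h <;> simp [h, he i]

theorem MvPolynomial.prod_X_sq_eq_monomial {σ R : Type*} [CommSemiring R] (S : Finset σ) :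
    (∏ a ∈ S, (X a : MvPolynomial σ R)) ^ 2 = monomial (∑ a ∈ S, Finsupp.single a 2) 1 := by
  rw [← Finset.prod_pow, monomial_sum_one]
  exact Finset.prod_congr rfl fun a _ => X_pow_eq_monomial

section Phi

variable {N : ℕ}

theorem phi_monomial (d : Fin N →₀ ℕ) (c : ℤ) :
    phi (monomial d c) = monomial (Finsupp.mapRange (fun n => min n 2) (by simp) d) c := by
  by_cases hc : c = 0 <;> simp [phi, support_monomial, hc]

theorem phi_add (p q : MvPolynomial (Fin N) ℤ) : phi (p + q) = phi p + phi q :=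
  Finsupp.sum_add_index (by simp) (by simp)

theorem phi_one : phi (1 : MvPolynomial (Fin N) ℤ) = 1 := by
  simpa using phi_monomial (N := N) 0 1

noncomputable def phiAddHom : MvPolynomial (Fin N) ℤ →+ MvPolynomial (Fin N) ℤ where
  toFun := phi
  map_zero' := by simp [phi]
  map_add' := phi_add

theorem phi_sum {ι : Type*} (s : Finset ι) (f : ι → MvPolynomial (Fin N) ℤ) :
    phi (∑ i ∈ s, f i) = ∑ i ∈ s, phi (f i) :=
  map_sum phiAddHom f s

theorem phi_monomial_one_mul {e : Fin N →₀ ℕ} (he : ∀ i, e i ≤ 2) {p : MvPolynomial (Fin N) ℤ}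
    (hp : ∀ d ∈ p.support, ∀ i, e i = 0 ∨ d i = 0) :
    phi (monomial e 1 * p) = monomial e 1 * phi p := by
  conv_lhs => rw [← support_sum_monomial_coeff p]
  conv_rhs => rw [← support_sum_monomial_coeff p]
  rw [Finset.mul_sum, phi_sum, phi_sum, Finset.mul_sum]
  refine Finset.sum_congr rfl fun d hd => ?_
  rw [monomial_mul, phi_monomial, phi_monomial, monomial_mul, one_mul,
    Finsupp.mapRange_min_add_of_disjoint he (hp d hd)]

end Phi

/-- Let `Y = ∏_{a ∈ S} x_a` be a squarefree monomial (a product of distinct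
indeterminates), and let `P` be a polynomial none of whose monomials shares an
indeterminate with `Y`. Then `φ(1 + Y²P) − Y² · φ(1 + P) = 1 − Y²`. -/
theorem phi_shift {N : ℕ} (S : Finset (Fin N)) (P : MvPolynomial (Fin N) ℤ)
    (hP : ∀ d ∈ P.support, ∀ a ∈ S, d a = 0) :
    phi (1 + (∏ a ∈ S, (X a : MvPolynomial (Fin N) ℤ)) ^ 2 * P) -
        (∏ a ∈ S, (X a : MvPolynomial (Fin N) ℤ)) ^ 2 * phi (1 + P) =
      1 - (∏ a ∈ S, (X a : MvPolynomial (Fin N) ℤ)) ^ 2 := by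
  set e : Fin N →₀ ℕ := ∑ a ∈ S, Finsupp.single a 2
  have he_apply : ∀ i, e i = if i ∈ S then 2 else 0 := by
    simp [e, Finsupp.finsetSum_apply, Finsupp.single_apply]
  have he : ∀ i, e i ≤ 2 := fun i => by rw [he_apply]; split_ifs <;> omega
  have hdisj : ∀ d ∈ P.support, ∀ i, e i = 0 ∨ d i = 0 := fun d hd i => by
    by_cases hi : i ∈ S
    · exact Or.inr (hP d hd i hi)
    · simp [he_apply, hi]
  rw [prod_X_sq_eq_monomial, phi_add, phi_add, phi_one, phi_monomial_one_mul he hdisj]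
  ring
end
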